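/- arXiv:1902.10172 — 4 statements merged into one kernel-verified Lean document; each statement's English description precedes it below -/
import Mathlib

section
/- Let V be a finite set and f : 2^V → ℝ a submodular function. For any X, Y ⊆ V, the modular upper bound m^f_X(Y) = f(X) − Σ_{j ∈ X∖Y} f(j | V∖{j}) + Σ_{j ∈ Y∖X} f(j | X) satisfies m^f_X(Y) ≥ f(Y). -/
lemma submod_dim {V : Type*} [DecidableEq V]
    (f : Finset V → ℝ)
    (hsub : ∀ S T : Finset V, f S + f T ≥ f (S ∪ T) + f (S ∩ T))
    {S T : Finset V} (hST : S ⊆ T) {a : V} (ha : a ∉ T) :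
    f (S ∪ {a}) - f S ≥ f (T ∪ {a}) - f T := by
  have h := hsub (S ∪ {a}) T
  have h1 : (S ∪ {a}) ∪ T = T ∪ {a} := by
    ext x; simp only [Finset.mem_union, Finset.mem_singleton]
    constructor
    · rintro ((h | h) | h) <;> tauto
    · exact fun h => by tauto
  have h2 : (S ∪ {a}) ∩ T = S := by
    ext x; simp only [Finset.mem_inter, Finset.mem_union, Finset.mem_singleton]
    constructor
    · rintro ⟨h | rfl, hx⟩
      · exact h
      · exact absurd hx ha
    · exact fun h => ⟨Or.inl h, hST h⟩
  rw [h1, h2] at h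
  linarith

lemma telescope_upper {V : Type*} [Fintype V] [DecidableEq V]
    (f : Finset V → ℝ)
    (hsub : ∀ S T : Finset V, f S + f T ≥ f (S ∪ T) + f (S ∩ T))
    (X : Finset V) :
    ∀ A : Finset V, Disjoint A X →
      f (X ∪ A) ≤ f X + ∑ j ∈ A, (f (X ∪ {j}) - f X) := by
  intro A
  induction A using Finset.induction_on with
  | empty => intro _; simp
  | @insert a A ha ih =>
    intro hd
    have hd' : Disjoint A X := by
      exact Finset.disjoint_of_subset_left (Finset.subset_insert a A) hd
    have haX : a ∉ X ∪ A := by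
      simp only [Finset.mem_union]
      rintro (h | h)
      · exact (Finset.disjoint_left.mp hd (Finset.mem_insert_self a A)) h
      · exact ha h
    have hdim := submod_dim f hsub Finset.subset_union_left haX
    have heq : X ∪ insert a A = (X ∪ A) ∪ {a} := by
      ext x; simp [Finset.mem_insert, Finset.mem_union]
    rw [heq, Finset.sum_insert ha]
    have := ih hd'
    linarith

lemma telescope_lower {V : Type*} [Fintype V] [DecidableEq V]
    (f : Finset V → ℝ)
    (hsub : ∀ S T : Finset V, f S + f T ≥ f (S ∪ T) + f (S ∩ T))
    (B : Finset V) :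
    ∀ A : Finset V, Disjoint A B →
      f (B ∪ A) ≥ f B + ∑ j ∈ A, (f Finset.univ - f (Finset.univ.erase j)) := by
  intro A
  induction A using Finset.induction_on with
  | empty => intro _; simp
  | @insert a A ha ih =>
    intro hd
    have hd' : Disjoint A B :=
      Finset.disjoint_of_subset_left (Finset.subset_insert a A) hd
    have haBA : a ∉ B ∪ A := by
      simp only [Finset.mem_union]
      rintro (h | h)
      · exact (Finset.disjoint_left.mp hd (Finset.mem_insert_self a A)) h
      · exact ha h
    have hsubset : B ∪ A ⊆ Finset.univ.erase a := by
      intro x hx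
      refine Finset.mem_erase.mpr ⟨?_, Finset.mem_univ x⟩
      rintro rfl; exact haBA hx
    have hnot : a ∉ Finset.univ.erase a := Finset.notMem_erase a _
    have hdim := submod_dim f hsub hsubset hnot
    have huniv : Finset.univ.erase a ∪ {a} = Finset.univ := by
      ext x
      simp only [Finset.mem_union, Finset.mem_erase, Finset.mem_univ,
        Finset.mem_singleton, iff_true]
      by_cases h : x = a <;> tauto
    rw [huniv] at hdim
    have heq : B ∪ insert a A = (B ∪ A) ∪ {a} := by
      ext x; simp [Finset.mem_insert, Finset.mem_union]
    rw [heq, Finset.sum_insert ha]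
    have := ih hd'
    linarith

/-- For a submodular `f` on a finite ground set `V`, the modular
upper bound `m^f_X(Y) = f(X) − Σ_{j∈X∖Y} f(j | V∖{j}) + Σ_{j∈Y∖X} f(j | X)`
satisfies `m^f_X(Y) ≥ f(Y)` for all `X, Y ⊆ V`. -/
theorem modular_upper_bound_ge
    {V : Type*} [Fintype V] [DecidableEq V]
    (f : Finset V → ℝ)
    (hsub : ∀ S T : Finset V, f S + f T ≥ f (S ∪ T) + f (S ∩ T))
    (X Y : Finset V) :
    f X - (∑ j ∈ X \ Y, (f Finset.univ - f (Finset.univ.erase j)))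
        + (∑ j ∈ Y \ X, (f (X ∪ {j}) - f X)) ≥ f Y := by
  have h1 := telescope_upper f hsub X (Y \ X) Finset.sdiff_disjoint
  have h2 := telescope_lower f hsub Y (X \ Y) Finset.sdiff_disjoint
  rw [Finset.union_sdiff_self_eq_union] at h1
  rw [Finset.union_sdiff_self_eq_union, Finset.union_comm] at h2
  linarith
end

section
/- Let V be a finite set and f : 2^V → ℝ a submodular function. Then for every nonempty X ⊆ V: |X|·f(X) ≥ Σ_{j∈X} f({j}) + (|X|−1)·Σ_{j∈X} f(j | X∖{j}), where f(j | X∖{j}) = f(X) − f(X∖{j}). -/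
/-!
Submodularity makes gains diminishing, so removing the elements of `T ⊆ X` from `X` one at a
time loses at least the sum of their gains with respect to `X`:
`f (X \ T) + ∑_{i ∈ T} f(i | X ∖ {i}) ≤ f X`. Taking `T = X ∖ {j}` gives
`f {j} + ∑_{i ≠ j} f(i | X ∖ {i}) ≤ f X`, and summing over `j ∈ X` yields the theorem.
-/

namespace Submodular

open Finset

variable {V : Type*} [DecidableEq V] {f : Finset V → ℝ}

theorem insert_sub_le_insert_sub
    (hsub : ∀ S T : Finset V, f S + f T ≥ f (S ∪ T) + f (S ∩ T))
    {A B : Finset V} (hAB : A ⊆ B) {a : V} (ha : a ∉ B) :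
    f (insert a B) - f B ≤ f (insert a A) - f A := by
  have h := hsub (insert a A) B
  rw [insert_union, union_eq_right.mpr hAB, insert_inter_of_notMem ha,
    inter_eq_left.mpr hAB] at h
  linarith

theorem sdiff_add_sum_gains_le
    (hsub : ∀ S T : Finset V, f S + f T ≥ f (S ∪ T) + f (S ∩ T))
    {X T : Finset V} (hTX : T ⊆ X) :
    f (X \ T) + ∑ i ∈ T, (f X - f (X.erase i)) ≤ f X := by
  induction T using Finset.induction_on with
  | empty => simp
  | insert a T haT ih =>
    have haX : a ∈ X := hTX (mem_insert_self a T)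
    have hgain : f X - f (X.erase a) ≤ f (X \ T) - f (X \ insert a T) := by
      have h := insert_sub_le_insert_sub hsub (A := X \ insert a T) (B := X.erase a)
        (fun x hx => by simp_all) (notMem_erase a X)
      rwa [insert_erase haX, ← sdiff_erase haX, erase_insert haT] at h
    rw [sum_insert haT]
    linarith [ih ((subset_insert a T).trans hTX)]

end Submodular

open Finset in
theorem card_mul_ge_singletons_add_gains_general
    {V : Type*} [DecidableEq V]
    (f : Finset V → ℝ)
    (hsub : ∀ S T : Finset V, f S + f T ≥ f (S ∪ T) + f (S ∩ T))
    (X : Finset V) :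
    (X.card : ℝ) * f X ≥
      (∑ j ∈ X, f {j}) + ((X.card : ℝ) - 1) * ∑ j ∈ X, (f X - f (X.erase j)) := by
  set G := ∑ j ∈ X, (f X - f (X.erase j))
  have hsingleton : ∀ j ∈ X, f {j} + (G - (f X - f (X.erase j))) ≤ f X := by
    intro j hj
    have h := Submodular.sdiff_add_sum_gains_le hsub (erase_subset j X)
    rwa [sdiff_erase_self hj, sum_erase_eq_sub hj] at h
  have hsum := sum_le_sum hsingleton
  rw [sum_add_distrib, sum_sub_distrib, sum_const, sum_const, nsmul_eq_mul, nsmul_eq_mul] at hsum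
  linarith

/-- For a submodular `f` on a finite ground set `V` and every
nonempty `X ⊆ V`:
`|X|·f(X) ≥ Σ_{j∈X} f({j}) + (|X|−1)·Σ_{j∈X} f(j | X∖{j})`, where
`f(j | X∖{j}) = f(X) − f(X∖{j})`. -/
theorem card_mul_ge_singletons_add_gains
    {V : Type*} [Fintype V] [DecidableEq V]
    (f : Finset V → ℝ)
    (hsub : ∀ S T : Finset V, f S + f T ≥ f (S ∪ T) + f (S ∩ T))
    (X : Finset V) (hX : X.Nonempty) :
    (X.card : ℝ) * f X ≥
      (∑ j ∈ X, f {j}) + ((X.card : ℝ) - 1) * ∑ j ∈ X, (f X - f (X.erase j)) :=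
  card_mul_ge_singletons_add_gains_general f hsub X
end

section
/- Let V be a finite set and f : 2^V → ℝ a monotone submodular function with f(∅) = 0. Let X ⊆ V be nonempty with Σ_{j∈X} f({j}) > 0, and define the average curvature κ̂_f(X) = 1 − (Σ_{j∈X} f(j | X∖{j}))/(Σ_{j∈X} f({j})) and α_f(X) = |X| / (1 + (|X|−1)·(1 − κ̂_f(X))). Then Σ_{j∈X} f({j}) ≤ α_f(X) · f(X). -/
/-!
Submodularity applied to `X \ B` and `X.erase i` telescopes into
`Σ_{i ∈ B} f(i | X∖{i}) ≤ f(X) − f(X∖B)`. Taking `B = X∖{j}` gives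
`f({j}) + Σ_{i ≠ j} f(i | X∖{i}) ≤ f(X)` for every `j ∈ X`, and summing over `j` yields
`Σ_j f({j}) + (|X| − 1) Σ_j f(j | X∖{j}) ≤ |X| f(X)`, which is the claim after clearing the
(positive) denominator of `α_f(X)`.
-/

open Finset

section Submodular

variable {V : Type*} [DecidableEq V] {f : Finset V → ℝ}

theorem sum_marginal_erase_le_sub_sdiff
    (hsub : ∀ S T : Finset V, f S + f T ≥ f (S ∪ T) + f (S ∩ T)) {X B : Finset V}
    (hB : B ⊆ X) : ∑ i ∈ B, (f X - f (X.erase i)) ≤ f X - f (X \ B) := by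
  induction B using Finset.induction_on with
  | empty => simp
  | @insert i B hiB ih =>
    have hiX : i ∈ X := hB (mem_insert_self i B)
    have hunion : X \ B ∪ X.erase i = X := by
      ext x; simp only [mem_union, mem_sdiff, mem_erase]; grind
    have hinter : X \ B ∩ X.erase i = X \ insert i B := by
      ext x; simp only [mem_inter, mem_sdiff, mem_erase, mem_insert]; grind
    have hstep := hsub (X \ B) (X.erase i)
    rw [hunion, hinter] at hstep
    rw [sum_insert hiB]
    linarith [ih ((subset_insert i B).trans hB)]

theorem singleton_add_sum_marginal_erase_le
    (hsub : ∀ S T : Finset V, f S + f T ≥ f (S ∪ T) + f (S ∩ T)) {X : Finset V} {j : V}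
    (hj : j ∈ X) : f {j} + ∑ i ∈ X.erase j, (f X - f (X.erase i)) ≤ f X := by
  have h := sum_marginal_erase_le_sub_sdiff hsub (erase_subset j X)
  rw [sdiff_erase_self hj] at h
  linarith

theorem sum_singleton_add_card_sub_one_mul_sum_marginal_le
    (hsub : ∀ S T : Finset V, f S + f T ≥ f (S ∪ T) + f (S ∩ T)) (X : Finset V) :
    ∑ j ∈ X, f {j} + ((X.card : ℝ) - 1) * ∑ j ∈ X, (f X - f (X.erase j)) ≤
      X.card * f X := by
  set m := ∑ j ∈ X, (f X - f (X.erase j))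
  have hper : ∀ j ∈ X, f {j} + (m - (f X - f (X.erase j))) ≤ f X := fun j hj => by
    rw [← sum_erase_eq_sub hj]
    exact singleton_add_sum_marginal_erase_le hsub hj
  have hsum := sum_le_sum hper
  rw [sum_add_distrib, sum_sub_distrib, sum_const, sum_const, nsmul_eq_mul, nsmul_eq_mul] at hsum
  linarith

end Submodular

theorem singleton_sum_le_curvature_factor_mul_general
    {V : Type*} [DecidableEq V]
    (f : Finset V → ℝ)
    (hsub : ∀ S T : Finset V, f S + f T ≥ f (S ∪ T) + f (S ∩ T))
    (hmono : ∀ S T : Finset V, S ⊆ T → f S ≤ f T)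
    (X : Finset V)
    (hpos : 0 < ∑ j ∈ X, f {j}) :
    (∑ j ∈ X, f {j}) ≤
      ((X.card : ℝ) /
        (1 + ((X.card : ℝ) - 1) *
          (1 - (1 - (∑ j ∈ X, (f X - f (X.erase j))) / (∑ j ∈ X, f {j}))))) * f X := by
  set s := ∑ j ∈ X, f {j}
  set m := ∑ j ∈ X, (f X - f (X.erase j))
  have hkey := sum_singleton_add_card_sub_one_mul_sum_marginal_le hsub X
  have hcard : (1 : ℝ) ≤ X.card := by
    exact_mod_cast card_pos.mpr (nonempty_of_sum_ne_zero hpos.ne')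
  have hm : 0 ≤ m := sum_nonneg fun j _ => sub_nonneg.mpr (hmono _ _ (erase_subset j X))
  have hden : 0 < 1 + ((X.card : ℝ) - 1) * (m / s) := by
    have := mul_nonneg (sub_nonneg.mpr hcard) (div_nonneg hm hpos.le); linarith
  rw [sub_sub_cancel, div_mul_eq_mul_div, le_div_iff₀ hden]
  calc s * (1 + ((X.card : ℝ) - 1) * (m / s)) = s + ((X.card : ℝ) - 1) * m := by
        field_simp
    _ ≤ X.card * f X := hkey

/-- For a monotone submodular `f` with `f(∅) = 0` and nonempty `X`
with `Σ_{j∈X} f({j}) > 0`, with average curvature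
`κ̂_f(X) = 1 − (Σ_{j∈X} f(j | X∖{j}))/(Σ_{j∈X} f({j}))` and
`α_f(X) = |X| / (1 + (|X|−1)·(1 − κ̂_f(X)))`, we have
`Σ_{j∈X} f({j}) ≤ α_f(X) · f(X)`. -/
theorem singleton_sum_le_curvature_factor_mul
    {V : Type*} [Fintype V] [DecidableEq V]
    (f : Finset V → ℝ)
    (hsub : ∀ S T : Finset V, f S + f T ≥ f (S ∪ T) + f (S ∩ T))
    (hmono : ∀ S T : Finset V, S ⊆ T → f S ≤ f T)
    (h0 : f ∅ = 0)
    (X : Finset V) (hX : X.Nonempty)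
    (hpos : 0 < ∑ j ∈ X, f {j}) :
    (∑ j ∈ X, f {j}) ≤
      ((X.card : ℝ) /
        (1 + ((X.card : ℝ) - 1) *
          (1 - (1 - (∑ j ∈ X, (f X - f (X.erase j))) / (∑ j ∈ X, f {j}))))) * f X :=
  singleton_sum_le_curvature_factor_mul_general f hsub hmono X hpos
end

section
/- Let V be a finite set, C a nonempty family of subsets of V, k ≥ 1, and for each i = 1,…,k let w_i : V → ℝ be a strictly positive weight vector and ψ_i : [0,∞) → [0,∞) a concave, monotone nondecreasing function with ψ_i(y) > 0 for y > 0, satisfying ψ_i(k'·y) ≤ (k')^c·ψ_i(y) for all k' ≥ 1, y ≥ 0, for a common constant c > 0. Fix ε' > 0 and set ε = (1+ε')^c − 1. For each i set l_i = min_{j∈V} w_i(j), u_i = w_i(V), breakpoints b_i^j = l_i·(1+ε')^{j−1} for j = 1,…,N_i with N_i the least integer such that b_i^{N_i} ≥ u_i, let ψ_i^{PL} be the piecewise-linear interpolant of ψ_i at these breakpoints, and define f(X) = Σ_{i=1}^k ψ_i(w_i(X)) and f^{PL}(X) = Σ_{i=1}^k ψ_i^{PL}(w_i(X)). Assume every X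 ∈ C is nonempty. If X̂ ∈ C satisfies f^{PL}(X̂) ≤ f^{PL}(X) for all X ∈ C, then f(X̂) ≤ (1+ε)·min_{X∈C} f(X). -/
lemma chord_le_concave (ψ : ℝ → ℝ) (hconc : ConcaveOn ℝ (Set.Ici 0) ψ)
    (a b y : ℝ) (ha : 0 ≤ a) (hab : a < b) (hy1 : a ≤ y) (hy2 : y ≤ b) :
    ψ a + ((ψ b - ψ a) / (b - a)) * (y - a) ≤ ψ y := by
  have hba : (0:ℝ) < b - a := by linarith
  set t := (y - a) / (b - a) with ht
  have ht0 : 0 ≤ t := div_nonneg (by linarith) hba.le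
  have ht1 : t ≤ 1 := (div_le_one hba).2 (by linarith)
  have hty : (1 - t) * a + t * b = y := by
    have h' : t * (b - a) = y - a := by rw [ht]; exact div_mul_cancel₀ _ hba.ne'
    linear_combination h'
  have := hconc.2 (Set.mem_Ici.2 ha) (Set.mem_Ici.2 (by linarith : (0:ℝ) ≤ b))
    (by linarith : (0:ℝ) ≤ 1 - t) ht0 (by ring)
  simp only [smul_eq_mul] at this
  rw [hty] at this
  have harg : ψ a + ((ψ b - ψ a) / (b - a)) * (y - a) = (1 - t) * ψ a + t * ψ b := by
    rw [ht]
    ring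
  linarith [harg ▸ this]

lemma left_le_chord (ψ : ℝ → ℝ) (hmono : MonotoneOn ψ (Set.Ici 0))
    (a b y : ℝ) (ha : 0 ≤ a) (hab : a < b) (hy1 : a ≤ y) :
    ψ a ≤ ψ a + ((ψ b - ψ a) / (b - a)) * (y - a) := by
  have hψ : ψ a ≤ ψ b := hmono (Set.mem_Ici.2 ha) (Set.mem_Ici.2 (by linarith)) hab.le
  have : 0 ≤ ((ψ b - ψ a) / (b - a)) * (y - a) :=
    mul_nonneg (div_nonneg (by linarith) (by linarith)) (by linarith)
  linarith



/-- Problem 1 guarantee of the PLA algorithm: with strictly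
positive weights `w_i`, concave monotone nonnegative `ψ_i` (positive on
positives) satisfying a common growth condition with constant `c > 0`,
`ε = (1+ε')^c − 1`, breakpoints `b_i^j = l_i·(1+ε')^{j−1}` (here 0-indexed:
`B i j = l i * (1+ε')^j`) up to the least `N_i` with `b_i^{N_i} ≥ u_i`, where
`l_i = min_j w_i(j)`, `u_i = w_i(V)`, and `ψ_i^{PL}` the piecewise-linear
interpolant of `ψ_i`: if every `X` in a nonempty feasible family `C` is
nonempty and `X̂ ∈ C` minimizes `f^{PL}(X) = Σ_i ψ_i^{PL}(w_i(X))` over `C`,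
then `f(X̂) ≤ (1+ε)·min_{X∈C} f(X)` where `f(X) = Σ_i ψ_i(w_i(X))`. -/
theorem pla_problem1_approx
    {V : Type*} [Fintype V] [DecidableEq V] [Nonempty V]
    (C : Finset (Finset V)) (hC : C.Nonempty)
    (k : ℕ) (hk : 1 ≤ k)
    (w : Fin k → V → ℝ) (hw : ∀ i j, 0 < w i j)
    (ψ : Fin k → ℝ → ℝ)
    (hconc : ∀ i, ConcaveOn ℝ (Set.Ici 0) (ψ i))
    (hmono : ∀ i, MonotoneOn (ψ i) (Set.Ici 0))
    (hnn : ∀ i, ∀ y : ℝ, 0 ≤ y → 0 ≤ ψ i y)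
    (hpos : ∀ i, ∀ y : ℝ, 0 < y → 0 < ψ i y)
    (c : ℝ) (hc : 0 < c)
    (hgrow : ∀ i, ∀ k' y : ℝ, 1 ≤ k' → 0 ≤ y → ψ i (k' * y) ≤ k' ^ c * ψ i y)
    (ε' : ℝ) (hε' : 0 < ε')
    (ε : ℝ) (hε : ε = (1 + ε') ^ c - 1)
    (l u : Fin k → ℝ)
    (hl : ∀ i, l i = Finset.univ.inf' Finset.univ_nonempty (w i))
    (hu : ∀ i, u i = ∑ j, w i j)
    (B : Fin k → ℕ → ℝ)
    (hB : ∀ i j, B i j = l i * (1 + ε') ^ j)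
    (N : Fin k → ℕ)
    (hN1 : ∀ i, 1 ≤ N i)
    (hNu : ∀ i, u i ≤ B i (N i - 1))
    (hNleast : ∀ i, ∀ m : ℕ, u i ≤ B i m → N i - 1 ≤ m)
    (ψPL : Fin k → ℝ → ℝ)
    (hPL : ∀ i, ∀ j : ℕ, j + 1 ≤ N i - 1 →
      ∀ y ∈ Set.Icc (B i j) (B i (j + 1)),
        ψPL i y = ψ i (B i j) +
          ((ψ i (B i (j + 1)) - ψ i (B i j)) / (B i (j + 1) - B i j)) * (y - B i j))
    (hCne : ∀ X ∈ C, X.Nonempty)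
    (Xhat : Finset V) (hXhat : Xhat ∈ C)
    (hopt : ∀ X ∈ C,
      (∑ i, ψPL i (∑ j ∈ Xhat, w i j)) ≤ ∑ i, ψPL i (∑ j ∈ X, w i j)) :
    (∑ i, ψ i (∑ j ∈ Xhat, w i j)) ≤
      (1 + ε) * C.inf' hC (fun X => ∑ i, ψ i (∑ j ∈ X, w i j)) := by
  classical
  have h1e : (0:ℝ) < 1 + ε' := by linarith
  have hrpos : (0:ℝ) < (1 + ε') ^ c := Real.rpow_pos_of_pos h1e c
  have hr1 : (1:ℝ) ≤ (1 + ε') ^ c := Real.one_le_rpow (by linarith) hc.le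
  have h1ε : 1 + ε = (1 + ε') ^ c := by rw [hε]; ring
  have hlpos : ∀ i, 0 < l i := by
    intro i
    rw [hl]
    exact (Finset.lt_inf'_iff _).2 fun j _ => hw i j
  -- bounds on w i X for nonempty X
  have hwlow : ∀ i (X : Finset V), X.Nonempty → l i ≤ ∑ j ∈ X, w i j := by
    intro i X hX
    obtain ⟨x, hx⟩ := hX
    have h1 : l i ≤ w i x := by rw [hl]; exact Finset.inf'_le _ (Finset.mem_univ x)
    have h2 : w i x ≤ ∑ j ∈ X, w i j :=
      Finset.single_le_sum (fun j _ => (hw i j).le) hx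
    linarith
  have hwhigh : ∀ i (X : Finset V), ∑ j ∈ X, w i j ≤ u i := by
    intro i X
    rw [hu]
    exact Finset.sum_le_sum_of_subset_of_nonneg (Finset.subset_univ X)
      (fun j _ _ => (hw i j).le)
  obtain ⟨Xs, hXsC, hinf⟩ := Finset.exists_mem_eq_inf' hC
    (fun X => ∑ i, ψ i (∑ j ∈ X, w i j))
  rw [hinf]
  by_cases hcard : Fintype.card V = 1
  · -- degenerate: all feasible sets equal univ
    have huniv : ∀ X ∈ C, X = Finset.univ := by
      intro X hX
      apply Finset.eq_univ_of_card
      have h1 : 0 < X.card := (hCne X hX).card_pos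
      have h2 : X.card ≤ Fintype.card V := Finset.card_le_univ X
      omega
    have hXX : Xhat = Xs := by rw [huniv Xhat hXhat, huniv Xs hXsC]
    rw [hXX]
    have hf0 : 0 ≤ ∑ i, ψ i (∑ j ∈ Xs, w i j) := by
      apply Finset.sum_nonneg
      intro i _
      exact hnn i _ (Finset.sum_nonneg fun j _ => (hw i j).le)
    nlinarith
  · -- main case: at least two elements
    have hcard2 : 1 < Fintype.card V := by
      have := Fintype.card_pos (α := V); omega
    obtain ⟨x₀, x₁, hx01⟩ := Fintype.exists_pair_of_one_lt_card hcard2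
    have hlu : ∀ i, l i < u i := by
      intro i
      have h1 : l i ≤ w i x₀ := by rw [hl]; exact Finset.inf'_le _ (Finset.mem_univ x₀)
      have h2 : w i x₀ + w i x₁ ≤ u i := by
        rw [hu]
        have : w i x₀ + w i x₁ = ∑ j ∈ ({x₀, x₁} : Finset V), w i j := by
          rw [Finset.sum_pair hx01]
        rw [this]
        exact Finset.sum_le_sum_of_subset_of_nonneg (Finset.subset_univ _)
          (fun j _ _ => (hw i j).le)
      have := hw i x₁
      linarith
    have hM1 : ∀ i, 1 ≤ N i - 1 := by
      intro i
      by_contra h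
      have h0 : N i - 1 = 0 := by omega
      have := hNu i
      rw [h0, hB] at this
      simp at this
      exact absurd this (not_le.2 (hlu i))
    -- key pointwise bounds
    have key : ∀ i (y : ℝ), l i ≤ y → y ≤ u i →
        ψPL i y ≤ ψ i y ∧ ψ i y ≤ (1 + ε') ^ c * ψPL i y := by
      intro i y hy1 hy2
      set M := N i - 1 with hMdef
      have hB0 : B i 0 = l i := by rw [hB]; simp
      have hP0 : B i 0 ≤ y := by rw [hB0]; exact hy1
      set j := Nat.findGreatest (fun j' => B i j' ≤ y) (M - 1) with hj
      have hjle : j ≤ M - 1 := Nat.findGreatest_le _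
      have hPj : B i j ≤ y := by
        have := Nat.findGreatest_spec (P := fun j' => B i j' ≤ y)
          (Nat.zero_le (M - 1)) hP0
        simpa [hj] using this
      have hj1M : j + 1 ≤ M := by have := hM1 i; omega
      have hyb : y ≤ B i (j + 1) := by
        by_cases h : j + 1 ≤ M - 1
        · have hng := Nat.findGreatest_is_greatest (P := fun j' => B i j' ≤ y)
            (n := M - 1) (by omega) h
          simp only [hj] at hng ⊢
          exact (not_le.1 hng).le
        · have hjeq : j + 1 = M := by omega
          rw [hjeq]
          exact le_trans hy2 (hNu i)
      set a := B i j with hadef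
      set b := B i (j + 1) with hbdef
      have ha0 : 0 < a := by
        rw [hadef, hB]
        have := hlpos i
        positivity
      have hba : b = (1 + ε') * a := by
        rw [hadef, hbdef, hB, hB, pow_succ]; ring
      have hab : a < b := by nlinarith
      have hPLy := hPL i j hj1M y ⟨hPj, hyb⟩
      constructor
      · rw [hPLy]
        exact chord_le_concave (ψ i) (hconc i) a b y ha0.le hab hPj hyb
      · have h1 : ψ i y ≤ ψ i b :=
          hmono i (Set.mem_Ici.2 (by linarith)) (Set.mem_Ici.2 (by linarith)) hyb
        have h2 : ψ i b ≤ (1 + ε') ^ c * ψ i a := by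
          rw [hba]
          exact hgrow i (1 + ε') a (by linarith) ha0.le
        have h3 : ψ i a ≤ ψPL i y := by
          rw [hPLy]
          exact left_le_chord (ψ i) (hmono i) a b y ha0.le hab hPj
        nlinarith
    calc ∑ i, ψ i (∑ j ∈ Xhat, w i j)
        ≤ ∑ i, (1 + ε') ^ c * ψPL i (∑ j ∈ Xhat, w i j) := by
          apply Finset.sum_le_sum
          intro i _
          exact (key i _ (hwlow i Xhat (hCne Xhat hXhat)) (hwhigh i Xhat)).2
      _ = (1 + ε') ^ c * ∑ i, ψPL i (∑ j ∈ Xhat, w i j) := by rw [Finset.mul_sum]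
      _ ≤ (1 + ε') ^ c * ∑ i, ψPL i (∑ j ∈ Xs, w i j) :=
          mul_le_mul_of_nonneg_left (hopt Xs hXsC) hrpos.le
      _ ≤ (1 + ε') ^ c * ∑ i, ψ i (∑ j ∈ Xs, w i j) := by
          apply mul_le_mul_of_nonneg_left _ hrpos.le
          apply Finset.sum_le_sum
          intro i _
          exact (key i _ (hwlow i Xs (hCne Xs hXsC)) (hwhigh i Xs)).1
      _ = (1 + ε) * ∑ i, ψ i (∑ j ∈ Xs, w i j) := by rw [h1ε]
end
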